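/- Let C and D be convex bodies in ℝ². There exists a constant c > 0 (depending on C and D) such that for every n ≥ 1 there exist n positive homothets C₁,…,Cₙ of C, Cᵢ = vᵢ + μᵢ • C with μᵢ > 0, contained in D, with pairwise disjoint interiors, and with ∑ᵢ μᵢ ≥ c·√n. (This shows the √n upper bound of Proposition 1 is tight up to the constant factor.) -/

import Mathlib

/-!
Place the centres of `n` equal homothets of `C` on a square grid with about `√n` points per
side inside a disc `ball p r ⊆ D`. The grid spacing is of order `r / √n`, so with
`C ⊆ closedBall 0 R` each homothety factor can be of order `r / (R √n)`, and the `n` factors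
sum to a constant times `√n`.
-/

open Function Metric Set

lemma homothety_image_subset_closedBall {E : Type*} [SeminormedAddCommGroup E] [NormedSpace ℝ E]
    {C : Set E} {R μ : ℝ} (hC : C ⊆ closedBall 0 R) (hμ : 0 ≤ μ) (v : E) :
    (fun x => v + μ • x) '' C ⊆ closedBall v (μ * R) := by
  rintro _ ⟨x, hx, rfl⟩
  rw [mem_closedBall, dist_self_add_left, norm_smul, Real.norm_of_nonneg hμ]
  exact mul_le_mul_of_nonneg_left (mem_closedBall_zero_iff.mp (hC hx)) hμ

noncomputable def gridPoint (s : ℝ) (a : ℕ × ℕ) : EuclideanSpace ℝ (Fin 2) :=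
  !₂[s * a.1, s * a.2]

lemma norm_gridPoint_le {s : ℝ} (hs : 0 ≤ s) (a : ℕ × ℕ) :
    ‖gridPoint s a‖ ≤ s * (a.1 + a.2) := by
  rw [EuclideanSpace.norm_eq, Real.sqrt_le_iff]
  simp only [gridPoint, Real.norm_eq_abs, sq_abs, Fin.sum_univ_two, Fin.isValue,
    Matrix.cons_val_zero, Matrix.cons_val_one, Matrix.cons_val_fin_one]
  have hcross : 0 ≤ s ^ 2 * ((a.1 : ℝ) * a.2) := by positivity
  exact ⟨by positivity, by nlinarith⟩

lemma one_le_sub_sq_of_ne {a b : ℕ} (h : a ≠ b) : 1 ≤ ((a : ℝ) - b) ^ 2 := by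
  rcases h.lt_or_gt with h | h
  · have : (a : ℝ) + 1 ≤ b := by exact_mod_cast h
    nlinarith
  · have : (b : ℝ) + 1 ≤ a := by exact_mod_cast h
    nlinarith

lemma le_dist_gridPoint {s : ℝ} (hs : 0 ≤ s) {a b : ℕ × ℕ} (h : a ≠ b) :
    s ≤ dist (gridPoint s a) (gridPoint s b) := by
  rw [EuclideanSpace.dist_eq, Real.le_sqrt hs (by positivity)]
  simp only [gridPoint, Real.dist_eq, sq_abs, Fin.sum_univ_two, Fin.isValue,
    Matrix.cons_val_zero, Matrix.cons_val_one, Matrix.cons_val_fin_one]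
  have hscale : ∀ x y : ℝ, (s * x - s * y) ^ 2 = s ^ 2 * (x - y) ^ 2 := fun _ _ => by ring
  rw [hscale, hscale]
  have h₁ := mul_nonneg (sq_nonneg s) (sq_nonneg ((a.1 : ℝ) - b.1))
  have h₂ := mul_nonneg (sq_nonneg s) (sq_nonneg ((a.2 : ℝ) - b.2))
  rcases not_and_or.mp (mt Prod.ext_iff.mpr h) with h | h
  · linarith [le_mul_of_one_le_right (sq_nonneg s) (one_le_sub_sq_of_ne h)]
  · linarith [le_mul_of_one_le_right (sq_nonneg s) (one_le_sub_sq_of_ne h)]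

lemma exists_disjoint_balls_in_ball (p : EuclideanSpace ℝ (Fin 2)) {r : ℝ} (hr : 0 < r)
    {n : ℕ} (hn : 1 ≤ n) :
    ∃ v : Fin n → EuclideanSpace ℝ (Fin 2),
      (∀ i, closedBall (v i) (r / (8 * √n)) ⊆ ball p r) ∧
      Pairwise (Disjoint on fun i => ball (v i) (r / (8 * √n))) := by
  set m := Nat.sqrt n + 1
  set s := r / (2 * m)
  have hs : 0 < s := by positivity
  have hrs : r = 2 * m * s := (mul_div_cancel₀ r (by positivity)).symm
  have hsqrt : 1 ≤ √(n : ℝ) := Real.one_le_sqrt.mpr (by exact_mod_cast hn)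
  have hm : (m : ℝ) ≤ 2 * √n := by
    push_cast [m]
    linarith [Real.nat_sqrt_le_real_sqrt (a := n)]
  have hδ : 2 * (r / (8 * √n)) ≤ s :=
    calc 2 * (r / (8 * √n)) = r / (4 * √n) := by ring
      _ ≤ s := div_le_div_of_nonneg_left hr.le (by positivity) (by linarith)
  obtain ⟨a, ha_inj, ha_lt⟩ :
      ∃ a : Fin n → ℕ × ℕ, Injective a ∧ ∀ i, (a i).1 < m ∧ (a i).2 < m :=
    ⟨fun i => Prod.map Fin.val Fin.val
        (finProdFinEquiv.symm (Fin.castLE (Nat.lt_succ_sqrt n).le i)),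
      (Prod.map_injective.mpr ⟨Fin.val_injective, Fin.val_injective⟩).comp
        (finProdFinEquiv.symm.injective.comp (Fin.castLE_injective _)),
      fun _ => ⟨Fin.is_lt _, Fin.is_lt _⟩⟩
  refine ⟨fun i => p + gridPoint s (a i), fun i => closedBall_subset_ball' ?_,
    fun i j hij => ball_disjoint_ball ?_⟩
  · have h₁ : ((a i).1 : ℝ) + 1 ≤ m := by exact_mod_cast (ha_lt i).1
    have h₂ : ((a i).2 : ℝ) + 1 ≤ m := by exact_mod_cast (ha_lt i).2
    have hnorm := norm_gridPoint_le hs.le (a i)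
    rw [dist_self_add_left]
    nlinarith
  · rw [dist_add_left]
    linarith [le_dist_gridPoint hs.le (ha_inj.ne hij)]

theorem exists_packing_sum_ge_sqrt
    (C D : Set (EuclideanSpace ℝ (Fin 2)))
    (hCcpt : IsCompact C)
    (hDint : (interior D).Nonempty) :
    ∃ c : ℝ, 0 < c ∧ ∀ n : ℕ, 1 ≤ n →
      ∃ (v : Fin n → EuclideanSpace ℝ (Fin 2)) (μ : Fin n → ℝ),
        (∀ i, 0 < μ i) ∧
        (∀ i, (fun x => v i + μ i • x) '' C ⊆ D) ∧
        (∀ i j, i ≠ j →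
          Disjoint (interior ((fun x => v i + μ i • x) '' C))
                   (interior ((fun x => v j + μ j • x) '' C))) ∧
        c * Real.sqrt n ≤ ∑ i, μ i := by
  obtain ⟨p, hp⟩ := hDint
  obtain ⟨r, hr, hpD⟩ := isOpen_iff.mp isOpen_interior p hp
  obtain ⟨R, hR, hCR⟩ := hCcpt.isBounded.subset_closedBall_lt 0 0
  refine ⟨r / (8 * R), by positivity, fun n hn => ?_⟩
  obtain ⟨v, hvD, hv_disj⟩ := exists_disjoint_balls_in_ball p hr hn
  have hsqrt : 0 < √(n : ℝ) := Real.sqrt_pos.mpr (by exact_mod_cast hn)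
  set δ := r / (8 * √n)
  set μ := δ / R
  have hμ : 0 < μ := by positivity
  have hsub : ∀ i, (fun x => v i + μ • x) '' C ⊆ closedBall (v i) δ := fun i =>
    div_mul_cancel₀ δ hR.ne' ▸ homothety_image_subset_closedBall hCR hμ.le (v i)
  have hint : ∀ i, interior ((fun x => v i + μ • x) '' C) ⊆ ball (v i) δ :=
    fun i => (interior_mono (hsub i)).trans (interior_closedBall _ (by positivity)).subset
  refine ⟨v, fun _ => μ, fun _ => hμ,
    fun i => (hsub i).trans ((hvD i).trans (hpD.trans interior_subset)),
    fun i j hij => (hv_disj hij).mono (hint i) (hint j), ?_⟩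
  rw [Finset.sum_const, Finset.card_univ, Fintype.card_fin, nsmul_eq_mul]
  apply le_of_eq
  calc r / (8 * R) * √n = n / √n * (r / (8 * R)) := by rw [Real.div_sqrt]; ring
    _ = n * μ := by ring
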